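/- Let R be a commutative ring, p a prime number, and m ≥ 1 an integer. In the formal power series ring R⟦X⟧, the element (1+X)^{p^{m−1}} − 1 lies in the m-th power of the ideal (p, X) generated by p and X. -/

import Mathlib

/-! Write `(1 + z) ^ p - 1 = z ^ p + p * z * r`. If `p ∈ I` and `z ∈ I ^ m` with `m ≥ 1`, both
terms lie in `I ^ (m + 1)`, so raising `1 + z` to the `p`-th power pushes `(1 + z) - 1` one power
of `I` deeper. Starting from `z = X ∈ (p, X)` and iterating `m - 1` times gives the claim. -/

namespace Ideal

variable {A : Type*} [CommRing A] {I : Ideal A} {p : ℕ}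

theorem one_add_pow_prime_sub_one_mem_pow_succ (hp : p.Prime) (hpI : (p : A) ∈ I) {m : ℕ}
    (hm : 1 ≤ m) {z : A} (hz : z ∈ I ^ m) : (1 + z) ^ p - 1 ∈ I ^ (m + 1) := by
  obtain ⟨r, hr⟩ := exists_add_pow_prime_eq hp (1 : A) z
  have hzp : z ^ p ∈ I ^ (m + 1) := by
    have hle : m + 1 ≤ m * p := by nlinarith [hp.two_le]
    exact pow_le_pow_right hle (pow_mul I m p ▸ pow_mem_pow hz p)
  have hpz : (p : A) * z ∈ I ^ (m + 1) := pow_succ' I m ▸ mul_mem_mul hpI hz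
  have hexpand : (1 + z) ^ p - 1 = z ^ p + p * z * r := by rw [hr]; ring
  rw [hexpand]
  exact add_mem hzp (mul_mem_right r _ hpz)

theorem one_add_pow_prime_pow_sub_one_mem_pow (hp : p.Prime) (hpI : (p : A) ∈ I) {z : A}
    (hz : z ∈ I) (k : ℕ) : (1 + z) ^ p ^ k - 1 ∈ I ^ (k + 1) := by
  induction k with
  | zero => simpa using hz
  | succ k ih =>
    have h := one_add_pow_prime_sub_one_mem_pow_succ hp hpI (Nat.le_add_left 1 k) ih
    rwa [add_sub_cancel, ← pow_mul, ← pow_succ] at h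

end Ideal

theorem omega_mem_pow_maximalIdeal_general
    (R : Type*) [CommRing R] (p : ℕ) (hp : p.Prime) (m : ℕ) :
    (1 + PowerSeries.X) ^ (p ^ (m - 1)) - 1 ∈
      (Ideal.span {(p : PowerSeries R), PowerSeries.X}) ^ m := by
  have hpI : (p : PowerSeries R) ∈ Ideal.span {(p : PowerSeries R), PowerSeries.X} :=
    Ideal.subset_span (by simp)
  have hXI : PowerSeries.X ∈ Ideal.span {(p : PowerSeries R), PowerSeries.X} :=
    Ideal.subset_span (by simp)
  exact Ideal.pow_le_pow_right (by omega)
    (Ideal.one_add_pow_prime_pow_sub_one_mem_pow hp hpI hXI (m - 1))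

/-- Lemma 2.21(a) (Iwasawa-algebra content): in `R⟦X⟧` the element
`(1+X)^{p^{m-1}} - 1` lies in the `m`-th power of the ideal `(p, X)`. -/
theorem omega_mem_pow_maximalIdeal
    (R : Type*) [CommRing R] (p : ℕ) (hp : p.Prime) (m : ℕ) (hm : 1 ≤ m) :
    (1 + PowerSeries.X) ^ (p ^ (m - 1)) - 1 ∈
      (Ideal.span {(p : PowerSeries R), PowerSeries.X}) ^ m :=
  omega_mem_pow_maximalIdeal_general R p hp m
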